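/- Let H ∈ C(ℝⁿ) be quasi-convex (every sub-level set {p : H(p) ≤ λ} is convex) with all sub-level sets bounded, and let η > 0 and ε > 0. Assume there exists p₁ = (p*',ρ₁) ∈ ℝ^{n−1}×ℝ with H(p₁) + η ≤ 0, and let ρ₀ := min{ρ ∈ ℝ : H((p*',ρ)) ≤ 0} (this minimum exists and ρ₀ < ρ₁). Set p₀ := (p*',ρ₀), φ₁⁺(x) := max_{p ∈ {H+η ≤ 0}} p·x, φ(x) := (1/(2ε))|x'|² + p₀·x, and ψ(x) := inf_{y'∈ℝ^{n−1}} [ (1/(2ε))|y'|² + p*'·y' + φ₁⁺(x − (y',0)) ]. Then there exists r > 0 such that ψ(x) ≤ φ(x) for all x ∈ B_r∩{xₙ ≤ 0}. -/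

import Mathlib

/-!
The minimum `ρ₀` exists because `{ρ | H (p*', ρ) ≤ 0}` is closed and bounded below, and `ρ₀ < ρ₁`
because `H < 0` near `p₁`. Let `K = {H + η ≤ 0}`, compact and convex, and take `δ > 0` such that
the closed `δ`-balls around points of `K` lie in `{H ≤ 0}`. Convexity of `{H ≤ 0}` and minimality
of `ρ₀` force `K` above a cone: `δ (ρ₀ - pₙ) + δ² ≤ (ρ₁ - ρ₀) |p' - p*'|` on `K`. Hence, for small
`x` with `xₙ ≤ 0`, every `p ∈ K` satisfies `p·x - (ε/2)|p' - p*'|² ≤ φ(x)`; the left side is the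
infimum over `y'` of the expression defining `ψ`. Since that expression is concave in `p`, the
infimum and the supremum over `K` can be exchanged: the choice `y' = ε (p̂' - p*')` at a maximiser
`p̂` of `p·x - (ε/2)|p' - p*'|²` on `K` works, by the first-order condition at `p̂`.
-/

open Metric Set Filter Topology Bornology
open scoped RealInnerProductSpace
noncomputable section
abbrev Euc (n : ℕ) := EuclideanSpace ℝ (Fin n)
def snocE {n : ℕ} (p : Euc n) (t : ℝ) : Euc (n + 1) :=
  (EuclideanSpace.equiv (Fin (n + 1)) ℝ).symm (Fin.snoc (fun i => p i) t)

lemma exists_isLeast_lt_of_neg {g : ℝ → ℝ} (hg : Continuous g) (hbdd : BddBelow {ρ | g ρ ≤ 0})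
    {ρ₁ : ℝ} (hρ₁ : g ρ₁ < 0) : ∃ ρ₀, IsLeast {ρ | g ρ ≤ 0} ρ₀ ∧ ρ₀ < ρ₁ := by
  have hleast := (isClosed_le hg continuous_const).isLeast_csInf ⟨ρ₁, hρ₁.le⟩ hbdd
  obtain ⟨ρ, hρ, hρρ₁⟩ := ((hg.tendsto ρ₁).eventually (gt_mem_nhds hρ₁)).filter_mono
    nhdsWithin_le_nhds |>.and self_mem_nhdsWithin |>.exists (f := 𝓝[<] ρ₁)
  exact ⟨_, hleast, (hleast.2 hρ.le).trans_lt hρρ₁⟩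

section Saddle

variable {E F : Type*} [NormedAddCommGroup E] [InnerProductSpace ℝ E]
  [NormedAddCommGroup F] [InnerProductSpace ℝ F]

lemma real_inner_le_div_mul_norm_sq_add {ε : ℝ} (hε : 0 < ε) (y c : F) :
    ⟪y, c⟫ ≤ 1 / (2 * ε) * ‖y‖ ^ 2 + ε / 2 * ‖c‖ ^ 2 := by
  have hyc := real_inner_le_norm y c
  have hsq := sq_nonneg (‖y‖ - ε * ‖c‖)
  have h2ε : 0 < 2 * ε := by positivity
  rw [div_mul_eq_mul_div, one_mul, div_add' _ _ _ h2ε.ne', le_div_iff₀ h2ε]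
  nlinarith

lemma exists_forall_add_inner_sub_le (T : E →L[ℝ] F) (b : F) (x : E) {ε M : ℝ} (hε : 0 < ε)
    {K : Set E} (hKc : IsCompact K) (hKv : Convex ℝ K) (hKne : K.Nonempty)
    (hM : ∀ p ∈ K, ⟪x, p⟫ - ε / 2 * ‖T p - b‖ ^ 2 ≤ M) :
    ∃ y : F, ∀ p ∈ K, 1 / (2 * ε) * ‖y‖ ^ 2 + ⟪b, y⟫ + (⟪x, p⟫ - ⟪y, T p⟫) ≤ M := by
  set G : E → ℝ := fun p => ⟪x, p⟫ - ε / 2 * ‖T p - b‖ ^ 2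
  have hG : ∀ p₀, HasFDerivAt G
      (innerSL ℝ x - (ε / 2) • (2 • (innerSL ℝ (T p₀ - b)).comp T)) p₀ := fun p₀ =>
    (innerSL ℝ x).hasFDerivAt.sub ((T.hasFDerivAt.sub_const b).norm_sq.const_smul (ε / 2))
  obtain ⟨p₀, hp₀K, hmax⟩ := hKc.exists_isMaxOn hKne
    (continuous_iff_continuousAt.2 fun p => (hG p).continuousAt).continuousOn
  refine ⟨ε • (T p₀ - b), fun p hp => ?_⟩
  set q := T p₀ - b
  have hfirst : ⟪x, p - p₀⟫ - ε * ⟪q, T (p - p₀)⟫ ≤ 0 := by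
    convert hmax.localize.hasFDerivWithinAt_nonpos (hG p₀).hasFDerivWithinAt
      (sub_mem_posTangentConeAt_of_segment_subset (hKv.segment_subset hp₀K hp)) using 1
    simp only [q, map_sub, ContinuousLinearMap.sub_comp, sub_apply, coe_innerSL_apply, smul_apply,
      ContinuousLinearMap.comp_apply, nsmul_eq_mul, Nat.cast_ofNat, smul_eq_mul, inner_sub_left,
      inner_sub_right]
    ring
  have hGp₀ : ⟪x, p₀⟫ - ε / 2 * ‖q‖ ^ 2 ≤ M := hM p₀ hp₀K
  have hTp₀ : T p₀ = q + b := (sub_add_cancel _ _).symm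
  rw [map_sub, hTp₀] at hfirst
  simp only [inner_sub_right, inner_add_right, real_inner_self_eq_norm_sq] at hfirst
  rw [norm_smul, Real.norm_eq_abs, abs_of_pos hε, real_inner_smul_right, real_inner_smul_left,
    real_inner_comm q b]
  field_simp
  linarith

lemma sInf_sSup_le_of_forall_le (T : E →L[ℝ] F) (b : F) (x : E) {ε M : ℝ} (hε : 0 < ε)
    {K : Set E} (hKc : IsCompact K) (hKv : Convex ℝ K) (hKne : K.Nonempty)
    (hM : ∀ p ∈ K, ⟪x, p⟫ - ε / 2 * ‖T p - b‖ ^ 2 ≤ M) :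
    sInf {t | ∃ y : F, t = 1 / (2 * ε) * ‖y‖ ^ 2 + ⟪b, y⟫ +
      sSup ((fun p => ⟪x, p⟫ - ⟪y, T p⟫) '' K)} ≤ M := by
  obtain ⟨y₀, hy₀⟩ := exists_forall_add_inner_sub_le T b x hε hKc hKv hKne hM
  obtain ⟨q, hq⟩ := hKne
  have hlow : ∀ y : F, ⟪x, q⟫ - ε / 2 * ‖T q - b‖ ^ 2 ≤
      1 / (2 * ε) * ‖y‖ ^ 2 + ⟪b, y⟫ + sSup ((fun p => ⟪x, p⟫ - ⟪y, T p⟫) '' K) := fun y => by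
    have hsup : ⟪x, q⟫ - ⟪y, T q⟫ ≤ sSup ((fun p => ⟪x, p⟫ - ⟪y, T p⟫) '' K) :=
      le_csSup (hKc.image (by fun_prop)).bddAbove (mem_image_of_mem _ hq)
    have hyoung := real_inner_le_div_mul_norm_sq_add hε y (T q - b)
    rw [inner_sub_right, real_inner_comm b y] at hyoung
    linarith
  have hy₀M : 1 / (2 * ε) * ‖y₀‖ ^ 2 + ⟪b, y₀⟫ +
      sSup ((fun p => ⟪x, p⟫ - ⟪y₀, T p⟫) '' K) ≤ M := by
    have hsup : sSup ((fun p => ⟪x, p⟫ - ⟪y₀, T p⟫) '' K) ≤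
        M - (1 / (2 * ε) * ‖y₀‖ ^ 2 + ⟪b, y₀⟫) :=
      csSup_le (Set.Nonempty.image _ ⟨q, hq⟩) (forall_mem_image.2 fun p hp => by
        linarith [hy₀ p hp])
    linarith
  refine csInf_le_of_le ?_ ⟨y₀, rfl⟩ hy₀M
  exact ⟨_, by rintro _ ⟨y, rfl⟩; exact hlow y⟩

end Saddle

lemma mul_add_mul_le_of_cone {a u v w δ D ε : ℝ} (hδ : 0 < δ) (hD : 0 < D) (hε : 0 < ε)
    (ha : 0 ≤ a) (hv : 0 ≤ v) (hw : 0 < w) (hcone : δ * w + δ ^ 2 ≤ D * a)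
    (hu : u ≤ ε * δ ^ 3 / (2 * D * (δ + D))) (hvr : v ≤ ε * δ ^ 3 / (2 * D * (δ + D))) :
    a * u + w * v ≤ ε / 2 * a ^ 2 := by
  set r := ε * δ ^ 3 / (2 * D * (δ + D))
  have hr : 2 * D * (δ + D) * r = ε * δ ^ 3 := mul_div_cancel₀ _ (by positivity)
  have hwa : δ * w ≤ D * a := by nlinarith
  have hδa : δ ^ 2 ≤ D * a := by nlinarith
  have hlin : δ * (a * u + w * v) ≤ a * r * (δ + D) := by
    have h1 : δ * a * u ≤ δ * a * r := mul_le_mul_of_nonneg_left hu (by positivity)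
    have h2 : δ * w * v ≤ D * a * v := mul_le_mul_of_nonneg_right hwa hv
    have h3 : D * a * v ≤ D * a * r := mul_le_mul_of_nonneg_left hvr (by positivity)
    linarith
  have hquad : a * ε * δ ^ 3 ≤ a * ε * δ * (D * a) := by
    have := mul_le_mul_of_nonneg_left hδa (by positivity : 0 ≤ a * ε * δ)
    linarith
  have : 2 * D * δ * (a * u + w * v) ≤ 2 * D * δ * (ε / 2 * a ^ 2) := by nlinarith
  exact le_of_mul_le_mul_left this (by positivity)

namespace Euc

variable {n : ℕ}

def projE : Euc (n + 1) →L[ℝ] Euc n :=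
  LinearMap.toContinuousLinearMap
    { toFun := fun x => WithLp.toLp 2 fun i => x i.castSucc
      map_add' := fun _ _ => rfl
      map_smul' := fun _ _ => rfl }

@[simp] lemma projE_apply (x : Euc (n + 1)) (i : Fin n) : projE x i = x i.castSucc := rfl

@[simp] lemma snocE_castSucc (p : Euc n) (t : ℝ) (i : Fin n) : snocE p t i.castSucc = p i := by
  simp [snocE]

@[simp] lemma snocE_last (p : Euc n) (t : ℝ) : snocE p t (Fin.last n) = t := by
  simp [snocE]

@[simp] lemma projE_snocE (p : Euc n) (t : ℝ) : projE (snocE p t) = p := by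
  ext i; simp

lemma inner_eq_inner_projE_add (x y : Euc (n + 1)) :
    ⟪x, y⟫ = ⟪projE x, projE y⟫ + x (Fin.last n) * y (Fin.last n) := by
  simp only [PiLp.inner_apply, RCLike.inner_apply, conj_trivial, Fin.sum_univ_castSucc,
    projE_apply, mul_comm]

lemma norm_sq_eq_norm_projE_sq_add (x : Euc (n + 1)) :
    ‖x‖ ^ 2 = ‖projE x‖ ^ 2 + x (Fin.last n) ^ 2 := by
  rw [← real_inner_self_eq_norm_sq, ← real_inner_self_eq_norm_sq, inner_eq_inner_projE_add, sq]

lemma sum_mul_eq_inner (x y : Euc n) : ∑ i, x i * y i = ⟪x, y⟫ := by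
  simp only [PiLp.inner_apply, RCLike.inner_apply, conj_trivial, mul_comm]

lemma sum_sq_eq_norm_sq (x : Euc n) : ∑ i, x i ^ 2 = ‖x‖ ^ 2 := by
  simp [EuclideanSpace.norm_sq_eq]

lemma norm_projE_sq (x : Euc (n + 1)) : ‖projE x‖ ^ 2 = ∑ i : Fin n, x i.castSucc ^ 2 := by
  simp [← sum_sq_eq_norm_sq]

lemma inner_snocE_left (p : Euc n) (t : ℝ) (x : Euc (n + 1)) :
    ⟪snocE p t, x⟫ = ⟪p, projE x⟫ + t * x (Fin.last n) := by
  simp [inner_eq_inner_projE_add]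

lemma inner_sub_snocE_zero (p x : Euc (n + 1)) (y : Euc n) :
    ⟪p, x - snocE y 0⟫ = ⟪x, p⟫ - ⟪y, projE p⟫ := by
  simp only [inner_eq_inner_projE_add p, map_sub, projE_snocE, inner_sub_right, real_inner_comm,
    PiLp.sub_apply, snocE_last, sub_zero]
  ring

lemma isometry_snocE (p : Euc n) : Isometry (snocE p) := by
  refine Isometry.of_dist_eq fun s t => ?_
  rw [dist_eq_norm, Real.dist_eq, ← sq_eq_sq₀ (norm_nonneg _) (abs_nonneg _), sq_abs,
    norm_sq_eq_norm_projE_sq_add]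
  simp

lemma norm_snocE_sq (p : Euc n) (t : ℝ) : ‖snocE p t‖ ^ 2 = ‖p‖ ^ 2 + t ^ 2 := by
  simpa using norm_sq_eq_norm_projE_sq_add (snocE p t)

-- `p - δ eₙ` and the point of the `δ`-ball around `(p*', ρ₁)` pushed away from `p'` have a convex
-- combination on the line `{(p*', ρ)}`.
lemma cone_bound {U : Set (Euc (n + 1))} (hU : Convex ℝ U) {pstar : Euc n} {ρ₀ ρ₁ δ : ℝ}
    (hδ : 0 < δ) (hρ₀ : ∀ ρ, snocE pstar ρ ∈ U → ρ₀ ≤ ρ)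
    (hq : closedBall (snocE pstar ρ₁) δ ⊆ U) {p : Euc (n + 1)} (hp : closedBall p δ ⊆ U) :
    δ * (ρ₀ - p (Fin.last n)) + δ ^ 2 ≤ (ρ₁ - ρ₀) * ‖projE p - pstar‖ := by
  set a := ‖projE p - pstar‖
  have ha : 0 ≤ a := norm_nonneg _
  have haδ : 0 < a + δ := by positivity
  have hz : p - snocE 0 δ ∈ U := hp <| by
    rw [mem_closedBall, dist_eq_norm, sub_sub_cancel_left, norm_neg,
      ← sq_le_sq₀ (norm_nonneg _) hδ.le, norm_snocE_sq]
    simp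
  have hw : snocE pstar ρ₁ - (δ / a) • snocE (projE p - pstar) 0 ∈ U := hq <| by
    rw [mem_closedBall, dist_eq_norm, sub_sub_cancel_left, norm_neg, norm_smul,
      ← sq_le_sq₀ (by positivity) hδ.le, mul_pow, norm_snocE_sq, Real.norm_eq_abs, sq_abs]
    rcases eq_or_ne a 0 with h | h
    · simp [h, sq_nonneg]
    · field_simp; simp [a]
  have hc := hU hz hw (div_nonneg hδ.le haδ.le) (div_nonneg ha haδ.le)
    (by field_simp; ring)
  have hscale : ∀ i, a * (δ / a) * (p i.castSucc - pstar i) = δ * (p i.castSucc - pstar i) := by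
    intro i
    rcases eq_or_ne a 0 with h | h
    · have : projE p = pstar := sub_eq_zero.1 (norm_eq_zero.1 h)
      simp [← this]
    · rw [mul_div_cancel₀ _ h]
  have hcomb : (δ / (a + δ)) • (p - snocE 0 δ) +
      (a / (a + δ)) • (snocE pstar ρ₁ - (δ / a) • snocE (projE p - pstar) 0) =
      snocE pstar ((δ * (p (Fin.last n) - δ) + a * ρ₁) / (a + δ)) := by
    ext i
    induction i using Fin.lastCases with
    | last =>
      simp only [PiLp.add_apply, PiLp.smul_apply, PiLp.sub_apply, snocE_last, smul_eq_mul,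
        mul_zero, sub_zero]
      field_simp
    | cast i =>
      simp only [PiLp.add_apply, PiLp.smul_apply, PiLp.sub_apply, snocE_castSucc, projE_apply,
        smul_eq_mul, PiLp.zero_apply, sub_zero]
      rw [div_mul_eq_mul_div, div_mul_eq_mul_div, ← add_div, div_eq_iff haδ.ne']
      linear_combination -hscale i
  have hmin := hρ₀ _ (hcomb ▸ hc)
  rw [le_div_iff₀ haδ] at hmin
  nlinarith

lemma inner_sub_le_of_cone {pstar : Euc n} {ρ₀ δ D ε : ℝ} (hδ : 0 < δ) (hD : 0 < D) (hε : 0 < ε)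
    {p x : Euc (n + 1)} (hp : δ * (ρ₀ - p (Fin.last n)) + δ ^ 2 ≤ D * ‖projE p - pstar‖)
    (hx : ‖x‖ ≤ ε * δ ^ 3 / (2 * D * (δ + D))) (hxn : x (Fin.last n) ≤ 0) :
    ⟪x, p⟫ - ε / 2 * ‖projE p - pstar‖ ^ 2 ≤
      1 / (2 * ε) * ‖projE x‖ ^ 2 + (⟪pstar, projE x⟫ + ρ₀ * x (Fin.last n)) := by
  have hsplit : ⟪x, p⟫ = ⟪projE x, projE p - pstar⟫ + ⟪pstar, projE x⟫ +
      p (Fin.last n) * x (Fin.last n) := by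
    rw [inner_eq_inner_projE_add, inner_sub_right, real_inner_comm pstar]; ring
  rcases le_or_gt ρ₀ (p (Fin.last n)) with hρ | hρ
  · have hyoung := real_inner_le_div_mul_norm_sq_add hε (projE x) (projE p - pstar)
    nlinarith
  · have hx' : ‖projE x‖ ≤ ‖x‖ := by
      rw [← sq_le_sq₀ (norm_nonneg _) (norm_nonneg _), norm_sq_eq_norm_projE_sq_add x]
      nlinarith
    have hxn' : -x (Fin.last n) ≤ ‖x‖ := by
      simpa [abs_of_nonpos hxn] using PiLp.norm_apply_le x (Fin.last n)
    have hcone := mul_add_mul_le_of_cone hδ hD hε (norm_nonneg _) (neg_nonneg.2 hxn)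
      (sub_pos.2 hρ) hp (hx'.trans hx) (hxn'.trans hx)
    have hcs := real_inner_le_norm (projE x) (projE p - pstar)
    have hquad : 0 ≤ 1 / (2 * ε) * ‖projE x‖ ^ 2 := by positivity
    nlinarith

end Euc

theorem statement_18 {n : ℕ} (H : Euc (n + 1) → ℝ) (hHC : Continuous H)
    (hqc : ∀ c : ℝ, Convex ℝ {p : Euc (n + 1) | H p ≤ c})
    (hbdd : ∀ c : ℝ, Bornology.IsBounded {p : Euc (n + 1) | H p ≤ c})
    (η ε : ℝ) (hη : 0 < η) (hε : 0 < ε)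
    (pstar : Euc n) (ρ₁ : ℝ) (hp₁ : H (snocE pstar ρ₁) + η ≤ 0) :
    ∃ ρ₀ : ℝ, IsLeast {ρ : ℝ | H (snocE pstar ρ) ≤ 0} ρ₀ ∧ ρ₀ < ρ₁ ∧
      ∃ r : ℝ, 0 < r ∧ ∀ x ∈ ball (0 : Euc (n + 1)) r, x (Fin.last n) ≤ 0 →
        sInf {t : ℝ | ∃ y' : Euc n,
            t = (1 / (2 * ε)) * (∑ i, (y' i) ^ 2) + (∑ i, pstar i * y' i) +
              sSup ((fun p : Euc (n + 1) => ∑ i, p i * (x - snocE y' 0) i) ''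
                {p | H p + η ≤ 0})} ≤
          (1 / (2 * ε)) * (∑ i : Fin n, (x i.castSucc) ^ 2) +
            ∑ i, snocE pstar ρ₀ i * x i := by
  have hline := Euc.isometry_snocE pstar
  obtain ⟨ρ₀, hleast, hρ₀ρ₁⟩ := exists_isLeast_lt_of_neg (hHC.comp hline.continuous)
    (hline.antilipschitz.isBounded_preimage (hbdd 0)).bddBelow
    (by linarith : H (snocE pstar ρ₁) < 0)
  refine ⟨ρ₀, hleast, hρ₀ρ₁, ?_⟩
  set K := {p : Euc (n + 1) | H p + η ≤ 0}
  have hK : K = {p | H p ≤ -η} := by simp only [K, le_neg_iff_add_nonpos_right]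
  have hKc : IsCompact K := isCompact_of_isClosed_isBounded
    (isClosed_le (by fun_prop) continuous_const) (hK ▸ hbdd (-η))
  have hq : snocE pstar ρ₁ ∈ K := hp₁
  obtain ⟨δ, hδ, hδK⟩ := hKc.exists_cthickening_subset_open (isOpen_lt hHC continuous_const)
    (fun p (hp : H p + η ≤ 0) => show H p < 0 by linarith)
  have hball : ∀ p ∈ K, closedBall p δ ⊆ {p | H p ≤ 0} := fun p hp z hz =>
    show H z ≤ 0 from le_of_lt (hδK (closedBall_subset_cthickening hp δ hz))
  refine ⟨ε * δ ^ 3 / (2 * (ρ₁ - ρ₀) * (δ + (ρ₁ - ρ₀))), by have := sub_pos.2 hρ₀ρ₁; positivity,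
    fun x hx hxn => ?_⟩
  have hM := sInf_sSup_le_of_forall_le Euc.projE pstar x hε hKc (hK ▸ hqc (-η)) ⟨_, hq⟩
    fun p hp => Euc.inner_sub_le_of_cone hδ (sub_pos.2 hρ₀ρ₁) hε
      (Euc.cone_bound (hqc 0) hδ (fun ρ hρ => hleast.2 hρ) (hball _ hq) (hball p hp))
      (mem_ball_zero_iff.1 hx).le hxn
  simp only [Euc.sum_sq_eq_norm_sq, ← Euc.norm_projE_sq, Euc.sum_mul_eq_inner,
    Euc.inner_snocE_left, Euc.inner_sub_snocE_zero]
  exact hM
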